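/- Let d ≥ 2, let f : ℝ^{d−1} → ℝ be a Lipschitz function, and let E = {(t, f(t)) : t ∈ [0,1]^{d−1}} ⊆ ℝ^d be the graph of f over the unit cube. If E is not contained in any affine hyperplane of ℝ^d, then the direction set 𝒟(E) has positive (d−1)-dimensional Hausdorff measure on S^{d−1}. -/

import Mathlib

open MeasureTheory Metric

/-- The set of directions determined by a set `A ⊆ ℝ^d`. -/
def directionSet {d : ℕ} (A : Set (EuclideanSpace ℝ (Fin d))) :
    Set (EuclideanSpace ℝ (Fin d)) :=
  {ω | ∃ x ∈ A, ∃ y ∈ A, x ≠ y ∧ ω = ‖x - y‖⁻¹ • (x - y)}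

/-- Append a last coordinate to a vector of `ℝ^m`, producing a vector of `ℝ^{m+1}`. -/
noncomputable def snocE {m : ℕ} (t : EuclideanSpace ℝ (Fin m)) (a : ℝ) :
    EuclideanSpace ℝ (Fin (m + 1)) :=
  (WithLp.equiv 2 (Fin (m + 1) → ℝ)).symm (Fin.snoc ((WithLp.equiv 2 (Fin m → ℝ)) t) a)

/-!
For a direction `e` of `ℝ^m`, the slopes of `f` along the chords of the open cube parallel to `e`
form an interval, since these chords form a convex family. If for every `e` this interval is a
single point, `f` is affine on the open cube, hence on the cube by continuity, and `E` lies in a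
hyperplane. Otherwise some unit direction `e₀` carries two slopes `σ₁ < σ₂`; fix `σ₁ < a < b < σ₂`.
Moving the lower endpoints of the two chords a little keeps them in the open cube and their slopes
below `a`, resp. above `b`, so `[a, b]` consists of slopes along every direction `e` near `e₀`. A chord of the
graph over direction `e` with slope `σ` has direction `(e, σ) / √(1 + σ²)`, whose first `m`
coordinates `(1 + σ²)^(-1/2) • e` therefore fill an open subset of `ℝ^m`. Dropping the last
coordinate is `1`-Lipschitz, so `μH[m] (𝒟 E) > 0`.
-/

open Set Filter Topology

section Snoc
variable {m : ℕ}

@[simp] lemma snocE_castSucc (t : EuclideanSpace ℝ (Fin m)) (a : ℝ) (i : Fin m) :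
    snocE t a i.castSucc = t i := by
  simp [snocE]

@[simp] lemma snocE_last (t : EuclideanSpace ℝ (Fin m)) (a : ℝ) :
    snocE t a (Fin.last m) = a := by
  simp [snocE]

lemma snocE_add (t s : EuclideanSpace ℝ (Fin m)) (a b : ℝ) :
    snocE (t + s) (a + b) = snocE t a + snocE s b := by
  ext i
  induction i using Fin.lastCases <;> simp

lemma snocE_sub (t s : EuclideanSpace ℝ (Fin m)) (a b : ℝ) :
    snocE (t - s) (a - b) = snocE t a - snocE s b := by
  ext i
  induction i using Fin.lastCases <;> simp

lemma snocE_smul (c : ℝ) (t : EuclideanSpace ℝ (Fin m)) (a : ℝ) :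
    snocE (c • t) (c * a) = c • snocE t a := by
  ext i
  induction i using Fin.lastCases <;> simp

lemma norm_snocE (t : EuclideanSpace ℝ (Fin m)) (a : ℝ) :
    ‖snocE t a‖ = √(‖t‖ ^ 2 + a ^ 2) := by
  rw [EuclideanSpace.norm_eq, EuclideanSpace.norm_eq, Real.sq_sqrt (by positivity),
    Fin.sum_univ_castSucc]
  simp

variable (m) in
noncomputable def dropLast :
    EuclideanSpace ℝ (Fin (m + 1)) →ₗ[ℝ] EuclideanSpace ℝ (Fin m) where
  toFun x := WithLp.toLp 2 fun i => x i.castSucc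
  map_add' _ _ := rfl
  map_smul' _ _ := rfl

@[simp] lemma dropLast_apply (x : EuclideanSpace ℝ (Fin (m + 1))) (i : Fin m) :
    dropLast m x i = x i.castSucc :=
  rfl

@[simp] lemma dropLast_snocE (t : EuclideanSpace ℝ (Fin m)) (a : ℝ) :
    dropLast m (snocE t a) = t := by
  ext i; simp

lemma norm_dropLast_le (x : EuclideanSpace ℝ (Fin (m + 1))) : ‖dropLast m x‖ ≤ ‖x‖ := by
  rw [EuclideanSpace.norm_eq, EuclideanSpace.norm_eq, Fin.sum_univ_castSucc]
  exact Real.sqrt_le_sqrt (by simpa using sq_nonneg (x (Fin.last m)))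

lemma lipschitzWith_dropLast : LipschitzWith 1 (dropLast m) :=
  AddMonoidHomClass.lipschitz_of_bound_nnnorm (dropLast m) 1 fun x => by
    simpa [← NNReal.coe_le_coe] using norm_dropLast_le x

end Snoc

def graphOver {m : ℕ} (f : EuclideanSpace ℝ (Fin m) → ℝ) (K : Set (EuclideanSpace ℝ (Fin m))) :
    Set (EuclideanSpace ℝ (Fin (m + 1))) :=
  {x | ∃ t ∈ K, x = snocE t (f t)}

lemma graphOver_mono {m : ℕ} {f : EuclideanSpace ℝ (Fin m) → ℝ}
    {K K' : Set (EuclideanSpace ℝ (Fin m))} (h : K ⊆ K') : graphOver f K ⊆ graphOver f K' :=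
  fun _ ⟨t, ht, hx⟩ => ⟨t, h ht, hx⟩

lemma directionSet_mono {d : ℕ} {A B : Set (EuclideanSpace ℝ (Fin d))} (h : A ⊆ B) :
    directionSet A ⊆ directionSet B :=
  fun _ ⟨x, hx, y, hy, hxy, hω⟩ => ⟨x, h hx, y, h hy, hxy, hω⟩

lemma inv_norm_smul_mem_directionSet {d : ℕ} {A : Set (EuclideanSpace ℝ (Fin d))}
    {x y w : EuclideanSpace ℝ (Fin d)} {c : ℝ} (hx : x ∈ A) (hy : y ∈ A) (hc : 0 < c)
    (hw : w ≠ 0) (h : x - y = c • w) : ‖w‖⁻¹ • w ∈ directionSet A := by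
  refine ⟨x, hx, y, hy, fun hxy => hw ?_, ?_⟩
  · rwa [hxy, sub_self, eq_comm, smul_eq_zero_iff_right hc.ne'] at h
  · rw [h, norm_smul, Real.norm_of_nonneg hc.le, smul_smul, mul_inv_rev, mul_assoc,
      inv_mul_cancel₀ hc.ne', mul_one]

section Slopes
variable {V : Type*} [NormedAddCommGroup V] [NormedSpace ℝ V] {K : Set V} {f : V → ℝ}

def slopesAlong (K : Set V) (f : V → ℝ) (e : V) : Set ℝ :=
  (fun z : V × ℝ => (f z.1 - f (z.1 - z.2 • e)) / z.2) ''
    {z | z.1 ∈ K ∧ z.1 - z.2 • e ∈ K ∧ 0 < z.2}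

lemma slope_mem_slopesAlong {e p : V} {l : ℝ} (hp : p ∈ K) (hq : p - l • e ∈ K) (hl : 0 < l) :
    (f p - f (p - l • e)) / l ∈ slopesAlong K f e :=
  ⟨(p, l), ⟨hp, hq, hl⟩, rfl⟩

lemma slopesAlong_zero_subset : slopesAlong K f 0 ⊆ {0} := by
  rintro _ ⟨z, -, rfl⟩
  simp

lemma mul_mem_slopesAlong_smul {e : V} {σ c : ℝ} (hc : 0 < c) (hσ : σ ∈ slopesAlong K f e) :
    c * σ ∈ slopesAlong K f (c • e) := by
  obtain ⟨⟨p, l⟩, ⟨hp, hq, hl⟩, rfl⟩ := hσ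
  have hq' : p - (l / c) • c • e = p - l • e := by rw [smul_smul, div_mul_cancel₀ _ hc.ne']
  convert slope_mem_slopesAlong hp (hq'.symm ▸ hq) (div_pos hl hc) using 1
  rw [hq']
  field_simp

lemma exists_norm_eq_one_lt_mem_slopesAlong {e : V} (he : (slopesAlong K f e).Nontrivial) :
    ∃ e₀ : V, ‖e₀‖ = 1 ∧ ∃ σ₁ ∈ slopesAlong K f e₀, ∃ σ₂ ∈ slopesAlong K f e₀, σ₁ < σ₂ := by
  have he₀ : e ≠ 0 := by
    rintro rfl
    exact he.not_subsingleton (subsingleton_singleton.anti slopesAlong_zero_subset)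
  have hc : 0 < ‖e‖⁻¹ := inv_pos.2 (norm_pos_iff.2 he₀)
  refine ⟨‖e‖⁻¹ • e, norm_smul_inv_norm he₀,
    ((he.image (mul_right_injective₀ hc.ne')).mono ?_).exists_lt⟩
  exact image_subset_iff.2 fun σ hσ => mul_mem_slopesAlong_smul hc hσ

lemma sub_eq_mul_of_mem_slopesAlong {e p q : V} {σ s : ℝ}
    (hS : (slopesAlong K f e).Subsingleton) (hσ : σ ∈ slopesAlong K f e) (hp : p ∈ K)
    (hq : q ∈ K) (h : p - q = s • e) :
    f p - f q = σ * s := by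
  rcases lt_trichotomy s 0 with hs | rfl | hs
  · have hqp : q - (-s) • e = p := by rw [neg_smul, sub_neg_eq_add, ← h]; abel
    have := hS (slope_mem_slopesAlong hq (hqp ▸ hp) (neg_pos.2 hs)) hσ
    rw [hqp, div_eq_iff (neg_ne_zero.2 hs.ne)] at this
    linarith
  · rw [zero_smul, sub_eq_zero] at h
    simp [h]
  · have hpq : p - s • e = q := by rw [← h]; abel
    have := hS (slope_mem_slopesAlong hp (hpq ▸ hq) hs) hσ
    rwa [hpq, div_eq_iff hs.ne'] at this

lemma exists_pos_add_smul_mem (hK : IsOpen K) {x : V} (hx : x ∈ K) (u w : V) :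
    ∃ δ : ℝ, 0 < δ ∧ x + δ • u ∈ K ∧ x + δ • w ∈ K := by
  have near : ∀ v : V, ∀ᶠ δ in 𝓝[>] (0 : ℝ), x + δ • v ∈ K := fun v =>
    nhdsWithin_le_nhds <| (Continuous.tendsto' (by fun_prop) 0 x (by simp)) (hK.mem_nhds hx)
  obtain ⟨δ, hδ, hu, hw⟩ := (eventually_mem_nhdsWithin.and ((near u).and (near w))).exists
  exact ⟨δ, hδ, hu, hw⟩

theorem exists_linearMap_eqOn_of_slopesAlong_subsingleton (hK : IsOpen K) {x₀ : V}
    (hx₀ : x₀ ∈ K) (hS : ∀ e, (slopesAlong K f e).Subsingleton) :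
    ∃ φ : V →ₗ[ℝ] ℝ, EqOn f (fun x => f x₀ + φ (x - x₀)) K := by
  have hne : ∀ e, (slopesAlong K f e).Nonempty := fun e => by
    obtain ⟨δ, hδ, he, -⟩ := exists_pos_add_smul_mem hK hx₀ e e
    exact ⟨_, slope_mem_slopesAlong (l := δ) he (by rwa [add_sub_cancel_right]) hδ⟩
  choose σ hσ using hne
  -- `σ e` is the slope of `f` along `e`; comparing chords that issue from `x₀` shows it is linear.
  have key : ∀ {e p q : V} (s : ℝ), p ∈ K → q ∈ K → p - q = s • e → f p - f q = σ e * s :=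
    fun s hp hq h => sub_eq_mul_of_mem_slopesAlong (hS _) (hσ _) hp hq h
  let φ : V →ₗ[ℝ] ℝ :=
    { toFun := σ
      map_add' := fun u v => by
        obtain ⟨δ, hδ, hu, huv⟩ := exists_pos_add_smul_mem hK hx₀ u (u + v)
        have h₁ := key (e := u + v) δ huv hx₀ (by simp)
        have h₂ := key (e := u) δ hu hx₀ (by simp)
        have h₃ := key (e := v) δ huv hu (by rw [smul_add]; abel)
        apply mul_right_cancel₀ hδ.ne'
        linarith
      map_smul' := fun c u => by
        obtain ⟨δ, hδ, hu, -⟩ := exists_pos_add_smul_mem hK hx₀ (c • u) (c • u)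
        have h₁ := key (e := c • u) δ hu hx₀ (by simp)
        have h₂ := key (e := u) (δ * c) hu hx₀ (by simp [mul_smul])
        apply mul_right_cancel₀ hδ.ne'
        simp only [smul_eq_mul, RingHom.id_apply]
        linarith }
  refine ⟨φ, fun x hx => ?_⟩
  have := key (e := x - x₀) 1 hx hx₀ (one_smul ℝ _).symm
  simp only [φ, LinearMap.coe_mk, AddHom.coe_mk]
  linarith

lemma isPreconnected_slopesAlong (hK : Convex ℝ K) (hf : ContinuousOn f K) (e : V) :
    IsPreconnected (slopesAlong K f e) := by
  refine IsPreconnected.image (Convex.isPreconnected ?_) _ ?_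
  · intro z hz w hw a b ha hb hab
    refine ⟨hK hz.1 hw.1 ha hb hab, ?_, convex_Ioi (0 : ℝ) hz.2.2 hw.2.2 ha hb hab⟩
    convert hK hz.2.1 hw.2.1 ha hb hab using 1
    simp only [Prod.fst_add, Prod.snd_add, Prod.smul_fst, Prod.smul_snd]
    module
  · exact ((hf.comp continuousOn_fst fun z hz => hz.1).sub
      (hf.comp (by fun_prop) fun z hz => hz.2.1)).div continuousOn_snd fun z hz => hz.2.2.ne'

theorem eventually_exists_mem_slopesAlong (hK : IsOpen K) (hf : ContinuousOn f K) {e₀ : V}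
    {σ : ℝ} (hσ : σ ∈ slopesAlong K f e₀) {S : Set ℝ} (hS : S ∈ 𝓝 σ) :
    ∀ᶠ e in 𝓝 e₀, ∃ τ ∈ slopesAlong K f e, τ ∈ S := by
  obtain ⟨⟨p, l⟩, ⟨hp, hq, hl⟩, rfl⟩ := hσ
  have hmove : Tendsto (fun e => p - l • e) (𝓝 e₀) (𝓝 (p - l • e₀)) :=
    Continuous.tendsto (by fun_prop) e₀
  have hslope : Tendsto (fun e => (f p - f (p - l • e)) / l) (𝓝 e₀)
      (𝓝 ((f p - f (p - l • e₀)) / l)) :=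
    (tendsto_const_nhds.sub ((hf.continuousAt (hK.mem_nhds hq)).tendsto.comp hmove)).div_const l
  filter_upwards [hmove (hK.mem_nhds hq), hslope hS] with e hqe hSe
  exact ⟨_, slope_mem_slopesAlong hp hqe hl, hSe⟩

theorem eventually_Icc_subset_slopesAlong (hK : IsOpen K) (hKc : Convex ℝ K)
    (hf : ContinuousOn f K) {e₀ : V} {σ₁ σ₂ a b : ℝ} (hσ₁ : σ₁ ∈ slopesAlong K f e₀)
    (hσ₂ : σ₂ ∈ slopesAlong K f e₀) (ha : σ₁ < a) (hb : b < σ₂) :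
    ∀ᶠ e in 𝓝 e₀, Icc a b ⊆ slopesAlong K f e := by
  filter_upwards [eventually_exists_mem_slopesAlong hK hf hσ₁ (Iio_mem_nhds ha),
    eventually_exists_mem_slopesAlong hK hf hσ₂ (Ioi_mem_nhds hb)]
    with e ⟨τ₁, h₁, hτ₁⟩ ⟨τ₂, h₂, hτ₂⟩
  exact (Icc_subset_Icc (le_of_lt hτ₁) (le_of_lt hτ₂)).trans
    ((isPreconnected_slopesAlong hKc hf e).Icc_subset h₁ h₂)

end Slopes

section Graph
variable {m : ℕ} {f : EuclideanSpace ℝ (Fin m) → ℝ} {K : Set (EuclideanSpace ℝ (Fin m))}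

lemma inv_norm_smul_snocE_mem_directionSet {e : EuclideanSpace ℝ (Fin m)} {σ : ℝ}
    (hσ : σ ∈ slopesAlong K f e) (he : e ≠ 0) :
    ‖snocE e σ‖⁻¹ • snocE e σ ∈ directionSet (graphOver f K) := by
  obtain ⟨⟨p, l⟩, ⟨hp, hq, hl⟩, rfl⟩ := hσ
  refine inv_norm_smul_mem_directionSet ⟨p, hp, rfl⟩ ⟨_, hq, rfl⟩ hl
    (fun h => he (by simpa using congrArg (dropLast m) h)) ?_
  rw [← snocE_sub, ← snocE_smul, sub_sub_cancel, mul_div_cancel₀ _ hl.ne']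

lemma exists_pos_image_Icc_mem_nhds {a b : ℝ} (hab : a < b) :
    ∃ r > 0, (fun σ : ℝ => (√(1 + σ ^ 2))⁻¹) '' Icc a b ∈ 𝓝 r := by
  set ψ := fun σ : ℝ => (√(1 + σ ^ 2))⁻¹
  have hψ : ∀ {σ τ : ℝ}, σ ^ 2 < τ ^ 2 → ψ τ < ψ σ := fun h =>
    inv_strictAnti₀ (by positivity) (Real.sqrt_lt_sqrt (by positivity) (by linarith))
  -- The midpoint is strictly closer to `0` than one of the endpoints.
  obtain ⟨σ, hσ, τ, hτ, hlt⟩ : ∃ σ ∈ Icc a b, ∃ τ ∈ Icc a b, σ ^ 2 < τ ^ 2 := by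
    have hmid : (a + b) / 2 ∈ Icc a b := ⟨by linarith, by linarith⟩
    by_cases h : ((a + b) / 2) ^ 2 < b ^ 2
    · exact ⟨_, hmid, b, right_mem_Icc.2 hab.le, h⟩
    · exact ⟨_, hmid, a, left_mem_Icc.2 hab.le, by nlinarith⟩
  have hsub : Icc (ψ τ) (ψ σ) ⊆ ψ '' Icc a b := by
    rw [← uIcc_of_le (hψ hlt).le]
    have hψc : Continuous ψ :=
      Continuous.inv₀ (by fun_prop) fun σ : ℝ => (Real.sqrt_pos.2 (by positivity)).ne'
    exact (intermediate_value_uIcc hψc.continuousOn).trans <|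
      image_mono (uIcc_subset_Icc hτ hσ)
  refine ⟨(ψ τ + ψ σ) / 2, by positivity, Filter.mem_of_superset ?_ hsub⟩
  exact Icc_mem_nhds (by linarith [hψ hlt]) (by linarith [hψ hlt])

theorem dropLast_image_directionSet_mem_nhds (hK : IsOpen K) (hKc : Convex ℝ K)
    (hf : ContinuousOn f K) {e₀ : EuclideanSpace ℝ (Fin m)} (he₀ : ‖e₀‖ = 1) {σ₁ σ₂ : ℝ}
    (hσ₁ : σ₁ ∈ slopesAlong K f e₀) (hσ₂ : σ₂ ∈ slopesAlong K f e₀) (hlt : σ₁ < σ₂) :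
    ∃ x, dropLast m '' directionSet (graphOver f K) ∈ 𝓝 x := by
  obtain ⟨a, h₁a, ha₂⟩ := exists_between hlt
  obtain ⟨b, hab, hb₂⟩ := exists_between ha₂
  obtain ⟨r, hr, hψ⟩ := exists_pos_image_Icc_mem_nhds hab
  have hre₀ : ‖r • e₀‖ = r := by rw [norm_smul, he₀, mul_one, Real.norm_of_nonneg hr.le]
  have hnorm : Tendsto (‖·‖) (𝓝 (r • e₀)) (𝓝 r) := by
    simpa only [hre₀] using continuous_norm.tendsto (r • e₀)
  have hdir : Tendsto (fun x => ‖x‖⁻¹ • x) (𝓝 (r • e₀)) (𝓝 e₀) := by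
    have : ContinuousAt (fun x : EuclideanSpace ℝ (Fin m) => ‖x‖⁻¹ • x) (r • e₀) :=
      (continuous_norm.continuousAt.inv₀ (by rw [hre₀]; exact hr.ne')).smul continuousAt_id
    simpa [hre₀, smul_smul, inv_mul_cancel₀ hr.ne'] using this.tendsto
  refine ⟨r • e₀, ?_⟩
  filter_upwards [hnorm hψ, hdir (eventually_Icc_subset_slopesAlong hK hKc hf hσ₁ hσ₂ h₁a hb₂)]
    with x ⟨σ, hσ, hψσ⟩ (hslopes : Icc a b ⊆ slopesAlong K f (‖x‖⁻¹ • x))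
  replace hψσ : (√(1 + σ ^ 2))⁻¹ = ‖x‖ := hψσ
  have hx : 0 < ‖x‖ := hψσ ▸ by positivity
  have he : ‖‖x‖⁻¹ • x‖ = 1 := norm_smul_inv_norm (norm_pos_iff.1 hx)
  refine ⟨_, inv_norm_smul_snocE_mem_directionSet (hslopes hσ)
    (norm_ne_zero_iff.1 (he ▸ one_ne_zero)), ?_⟩
  rw [map_smul, dropLast_snocE, norm_snocE, he, one_pow, hψσ, smul_smul,
    mul_inv_cancel₀ hx.ne', one_smul]

theorem hausdorffMeasure_directionSet_graphOver_pos (hK : IsOpen K) (hKc : Convex ℝ K)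
    (hf : ContinuousOn f K) {e₀ : EuclideanSpace ℝ (Fin m)} (he₀ : ‖e₀‖ = 1) {σ₁ σ₂ : ℝ}
    (hσ₁ : σ₁ ∈ slopesAlong K f e₀) (hσ₂ : σ₂ ∈ slopesAlong K f e₀) (hlt : σ₁ < σ₂) :
    0 < μH[(m : ℝ)] (directionSet (graphOver f K)) := by
  obtain ⟨x, hx⟩ := dropLast_image_directionSet_mem_nhds hK hKc hf he₀ hσ₁ hσ₂ hlt
  calc 0 < μH[(m : ℝ)] (dropLast m '' directionSet (graphOver f K)) :=
        Measure.measure_pos_of_mem_nhds _ hx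
    _ ≤ μH[(m : ℝ)] (directionSet (graphOver f K)) := by
      simpa using lipschitzWith_dropLast.hausdorffMeasure_image_le (Nat.cast_nonneg m) _

theorem exists_graphOver_subset_hyperplane (φ : EuclideanSpace ℝ (Fin m) →ₗ[ℝ] ℝ)
    (x₀ : EuclideanSpace ℝ (Fin m)) (h : EqOn f (fun x => f x₀ + φ (x - x₀)) K) :
    ∃ (v : EuclideanSpace ℝ (Fin (m + 1))) (W : Submodule ℝ (EuclideanSpace ℝ (Fin (m + 1)))),
      Module.finrank ℝ W = m ∧ graphOver f K ⊆ (fun w => v + w) '' W := by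
  let Γ : EuclideanSpace ℝ (Fin m) →ₗ[ℝ] EuclideanSpace ℝ (Fin (m + 1)) :=
    { toFun := fun u => snocE u (φ u)
      map_add' := fun u v => by rw [map_add, snocE_add]
      map_smul' := fun c u => by rw [map_smul, smul_eq_mul, snocE_smul]; rfl }
  have hΓ : Function.Injective Γ :=
    Function.LeftInverse.injective (g := dropLast m) fun u => dropLast_snocE u _
  refine ⟨snocE x₀ (f x₀), LinearMap.range Γ, ?_, ?_⟩
  · rw [LinearMap.finrank_range_of_inj hΓ, finrank_euclideanSpace_fin]
  · rintro _ ⟨t, ht, rfl⟩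
    refine ⟨Γ (t - x₀), LinearMap.mem_range_self _ _, ?_⟩
    simp only [Γ, LinearMap.coe_mk, AddHom.coe_mk, ← snocE_add, add_sub_cancel, h ht]

end Graph

section Cube
variable (m : ℕ)

def unitCube : Set (EuclideanSpace ℝ (Fin m)) := {t | ∀ i, t i ∈ Icc 0 1}

def openUnitCube : Set (EuclideanSpace ℝ (Fin m)) := {t | ∀ i, t i ∈ Ioo 0 1}

lemma openUnitCube_eq_preimage :
    openUnitCube m = PiLp.homeomorph 2 (fun _ : Fin m => ℝ) ⁻¹' univ.pi fun _ => Ioo 0 1 := by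
  ext
  simp only [openUnitCube, mem_preimage, mem_univ_pi]
  rfl

lemma isOpen_openUnitCube : IsOpen (openUnitCube m) := by
  rw [openUnitCube_eq_preimage]
  exact (isOpen_set_pi finite_univ fun _ _ => isOpen_Ioo).preimage
    (PiLp.homeomorph _ _).continuous

lemma closure_openUnitCube : closure (openUnitCube m) = unitCube m := by
  rw [openUnitCube_eq_preimage, ← Homeomorph.preimage_closure, closure_pi_set,
    closure_Ioo zero_ne_one]
  ext
  simp only [unitCube, mem_preimage, mem_univ_pi]
  rfl

lemma openUnitCube_subset_unitCube : openUnitCube m ⊆ unitCube m :=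
  fun _ ht i => Ioo_subset_Icc_self (ht i)

lemma convex_openUnitCube : Convex ℝ (openUnitCube m) :=
  fun _ hx _ hy _ _ ha hb hab i => by simpa using convex_Ioo (0 : ℝ) 1 (hx i) (hy i) ha hb hab

lemma openUnitCube_nonempty : (openUnitCube m).Nonempty :=
  ⟨WithLp.toLp 2 fun _ => 1 / 2, fun _ => by norm_num⟩

end Cube

theorem directions_of_lipschitz_graph_general (m : ℕ)
    (f : EuclideanSpace ℝ (Fin m) → ℝ) (L : NNReal) (hf : LipschitzWith L f)
    (E : Set (EuclideanSpace ℝ (Fin (m + 1))))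
    (hE : E = {x : EuclideanSpace ℝ (Fin (m + 1)) |
      ∃ t : EuclideanSpace ℝ (Fin m), (∀ i, t i ∈ Set.Icc (0 : ℝ) 1) ∧ x = snocE t (f t)})
    (hplane : ¬ ∃ (v : EuclideanSpace ℝ (Fin (m + 1)))
      (W : Submodule ℝ (EuclideanSpace ℝ (Fin (m + 1)))),
      Module.finrank ℝ W = m ∧
        E ⊆ (fun w => v + w) '' (W : Set (EuclideanSpace ℝ (Fin (m + 1))))) :
    0 < μH[(m : ℝ)] (directionSet E) := by
  obtain rfl : E = graphOver f (unitCube m) := hE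
  by_cases hS : ∀ e, (slopesAlong (openUnitCube m) f e).Subsingleton
  · obtain ⟨c, hc⟩ := openUnitCube_nonempty m
    obtain ⟨φ, hφ⟩ :=
      exists_linearMap_eqOn_of_slopesAlong_subsingleton (isOpen_openUnitCube m) hc hS
    have hφc : Continuous fun x => f c + φ (x - c) :=
      continuous_const.add (φ.continuous_of_finiteDimensional.comp (continuous_sub_right c))
    have hQ := closure_openUnitCube m ▸ hφ.closure hf.continuous hφc
    exact absurd (exists_graphOver_subset_hyperplane φ c hQ) hplane
  · obtain ⟨e, he⟩ := not_forall.1 hS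
    obtain ⟨e₀, he₀, σ₁, h₁, σ₂, h₂, hlt⟩ :=
      exists_norm_eq_one_lt_mem_slopesAlong (not_subsingleton_iff.1 he)
    exact (hausdorffMeasure_directionSet_graphOver_pos (isOpen_openUnitCube m)
      (convex_openUnitCube m) hf.continuous.continuousOn he₀ h₁ h₂ hlt).trans_le
      (measure_mono (directionSet_mono (graphOver_mono (openUnitCube_subset_unitCube m))))

theorem directions_of_lipschitz_graph (m : ℕ) (hm : 1 ≤ m)
    (f : EuclideanSpace ℝ (Fin m) → ℝ) (L : NNReal) (hf : LipschitzWith L f)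
    (E : Set (EuclideanSpace ℝ (Fin (m + 1))))
    (hE : E = {x : EuclideanSpace ℝ (Fin (m + 1)) |
      ∃ t : EuclideanSpace ℝ (Fin m), (∀ i, t i ∈ Set.Icc (0 : ℝ) 1) ∧ x = snocE t (f t)})
    (hplane : ¬ ∃ (v : EuclideanSpace ℝ (Fin (m + 1)))
      (W : Submodule ℝ (EuclideanSpace ℝ (Fin (m + 1)))),
      Module.finrank ℝ W = m ∧
        E ⊆ (fun w => v + w) '' (W : Set (EuclideanSpace ℝ (Fin (m + 1))))) :
    0 < μH[(m : ℝ)] (directionSet E) :=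
  directions_of_lipschitz_graph_general m f L hf E hE hplane
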